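/- Let R be a reduced extended affine root system and P ⊆ R^× a subset with W_P = W. Then ⟨P⟩ = ⟨R⟩ (P generates the root lattice) and P is connected, i.e. P is not a disjoint union of two nonempty subsets P₁, P₂ with (P₁,P₂) = {0}. -/

import Mathlib

open Pointwise
open scoped Classical

noncomputable section

namespace EARSPaper

variable {V : Type*} [AddCommGroup V] [Module ℝ V]

/-- The reflection based on `a`: `x ↦ x - (2 B(x,a)/B(a,a)) • a`.
By the division-by-zero convention this is the identity map when `B a a = 0`. -/
def reflMap (B : LinearMap.BilinForm ℝ V) (a : V) : V →ₗ[ℝ] V :=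
  LinearMap.id - ((2 / B a a) • B.flip a).smulRight a

theorem reflMap_apply (B : LinearMap.BilinForm ℝ V) (a x : V) :
    reflMap B a x = x - (2 / B a a * B x a) • a := by
  simp [reflMap, LinearMap.smulRight_apply, LinearMap.smul_apply, smul_eq_mul]

theorem reflMap_invol (B : LinearMap.BilinForm ℝ V) (a x : V) :
    reflMap B a (reflMap B a x) = x := by
  rcases eq_or_ne (B a a) 0 with h | h
  · simp [reflMap_apply, h]
  · rw [reflMap_apply, reflMap_apply]
    rw [map_sub, map_smul, LinearMap.sub_apply, LinearMap.smul_apply, smul_eq_mul]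
    have hs : 2 / B a a * (B x a - 2 / B a a * B x a * B a a) = -(2 / B a a * B x a) := by
      field_simp
      ring
    rw [hs, neg_smul, sub_neg_eq_add, sub_add_cancel]

/-- The reflection based on `a` as a linear automorphism of `V`. -/
def reflEquiv (B : LinearMap.BilinForm ℝ V) (a : V) : V ≃ₗ[ℝ] V :=
  LinearEquiv.ofLinear (reflMap B a) (reflMap B a)
    (LinearMap.ext fun x => reflMap_invol B a x)
    (LinearMap.ext fun x => reflMap_invol B a x)

@[simp] theorem reflEquiv_apply (B : LinearMap.BilinForm ℝ V) (a x : V) :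
    reflEquiv B a x = reflMap B a x := rfl

/-- The set of nonisotropic elements of `R`. -/
def nonIso (B : LinearMap.BilinForm ℝ V) (R : Set V) : Set V := {a ∈ R | B a a ≠ 0}

/-- Connectedness of a set with respect to the form. -/
def IsConnSet (B : LinearMap.BilinForm ℝ V) (P : Set V) : Prop :=
  ¬ ∃ P₁ P₂ : Set V, P₁.Nonempty ∧ P₂.Nonempty ∧ P₁ ∪ P₂ = P ∧ P₁ ∩ P₂ = ∅ ∧
      ∀ a ∈ P₁, ∀ b ∈ P₂, B a b = 0

/-- Extended affine root system (axioms (R1)-(R6), for a positive semidefinite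
symmetric bilinear form). -/
structure IsEARS (B : LinearMap.BilinForm ℝ V) (R : Set V) : Prop where
  symm : ∀ x y : V, B x y = B y x
  posSemidef : ∀ x : V, 0 ≤ B x x
  lattice : ∃ s : Set V, LinearIndependent ℝ ((↑) : s → V) ∧
      Submodule.span ℝ s = ⊤ ∧ AddSubgroup.closure R = AddSubgroup.closure s
  integrality : ∀ a ∈ nonIso B R, ∀ b ∈ nonIso B R, ∃ n : ℤ, 2 * B b a / B a a = (n : ℝ)
  reflInvariant : ∀ a ∈ nonIso B R, ∀ b ∈ R, reflMap B a b ∈ R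
  isoEq : R ∩ (LinearMap.ker B : Set V) =
      (LinearMap.ker B : Set V) ∩ (nonIso B R - nonIso B R)
  notTwice : ∀ a ∈ nonIso B R, (2 : ℝ) • a ∉ R
  conn : IsConnSet B (nonIso B R)

/-- `R` is reduced: no `α, β ∈ R^×` with `α - 2β ∈ V⁰`. -/
def IsReduced (B : LinearMap.BilinForm ℝ V) (R : Set V) : Prop :=
  ¬ ∃ a ∈ nonIso B R, ∃ b ∈ nonIso B R, a - (2 : ℝ) • b ∈ LinearMap.ker B

/-- `R` is simply laced: the form takes a single value on `R^×`. -/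
def IsSimplyLaced (B : LinearMap.BilinForm ℝ V) (R : Set V) : Prop :=
  ∀ a ∈ nonIso B R, ∀ b ∈ nonIso B R, B a a = B b b

/-- The nullity: the dimension of the radical of the form. -/
def nullity (B : LinearMap.BilinForm ℝ V) : ℕ := Module.finrank ℝ ↥(LinearMap.ker B)

/-- The rank: `dim V - nullity`. -/
def rank (B : LinearMap.BilinForm ℝ V) : ℕ := Module.finrank ℝ V - nullity B

/-- The group generated by the reflections `w_a`, `a ∈ P`, acting on `V`. -/
def weylOn (B : LinearMap.BilinForm ℝ V) (P : Set V) : Subgroup (V ≃ₗ[ℝ] V) :=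
  Subgroup.closure (reflEquiv B '' P)

/-- The set `W_P ⬝ P = {w a : w ∈ W_P, a ∈ P}`. -/
def reflOrbit (B : LinearMap.BilinForm ℝ V) (P : Set V) : Set V :=
  {x | ∃ w ∈ weylOn B P, ∃ a ∈ P, w a = x}

/-- `P` is a reflectable set for `R`: `P ⊆ R^×` and `W_P ⬝ P = R^×`. -/
def IsReflSet (B : LinearMap.BilinForm ℝ V) (R P : Set V) : Prop :=
  P ⊆ nonIso B R ∧ reflOrbit B P = nonIso B R

/-- `P` is a reflectable base for `R`. -/
def IsReflBase (B : LinearMap.BilinForm ℝ V) (R P : Set V) : Prop :=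
  IsReflSet B R P ∧ ∀ Q ⊆ P, Q ≠ P → ¬ IsReflSet B R Q

/-- The space `Ṽ = V ⊕ (V⁰)*`. -/
abbrev VT (B : LinearMap.BilinForm ℝ V) : Type _ := V × Module.Dual ℝ ↥(LinearMap.ker B)

/-- The projection of `V` onto the radical `V⁰` along the fixed complement `V̇`. -/
def projRad (B : LinearMap.BilinForm ℝ V) (Vdot : Submodule ℝ V)
    (hc : IsCompl (LinearMap.ker B) Vdot) : V →ₗ[ℝ] ↥(LinearMap.ker B) :=
  (LinearMap.ker B).linearProjOfIsCompl Vdot hc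

/-- The extension of the form `B` to a nondegenerate symmetric bilinear form on
`Ṽ = V ⊕ (V⁰)*`. -/
def formT (B : LinearMap.BilinForm ℝ V) (Vdot : Submodule ℝ V)
    (hc : IsCompl (LinearMap.ker B) Vdot) : LinearMap.BilinForm ℝ (VT B) :=
  LinearMap.mk₂ ℝ
    (fun x y => B x.1 y.1 + y.2 (projRad B Vdot hc x.1) + x.2 (projRad B Vdot hc y.1))
    (fun x x' y => by
      simp only [Prod.fst_add, Prod.snd_add, map_add, LinearMap.add_apply]; ring)
    (fun c x y => by
      simp only [Prod.smul_fst, Prod.smul_snd, map_smul, LinearMap.smul_apply,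
        smul_eq_mul]; ring)
    (fun x y y' => by
      simp only [Prod.fst_add, Prod.snd_add, map_add, LinearMap.add_apply]; ring)
    (fun c x y => by
      simp only [Prod.smul_fst, Prod.smul_snd, map_smul, LinearMap.smul_apply,
        smul_eq_mul]; ring)

/-- The subgroup of `GL(Ṽ)` generated by the reflections based on `(a, 0)`, `a ∈ P`.
For `P = R^×` this is the extended affine Weyl group `W` of `R`. -/
def weylTilde (B : LinearMap.BilinForm ℝ V) (Vdot : Submodule ℝ V)
    (hc : IsCompl (LinearMap.ker B) Vdot) (P : Set V) :
    Subgroup ((VT B) ≃ₗ[ℝ] (VT B)) :=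
  Subgroup.closure ((fun a => reflEquiv (formT B Vdot hc) (a, 0)) '' P)

theorem reflT_mem_weylTilde (B : LinearMap.BilinForm ℝ V) (Vdot : Submodule ℝ V)
    (hc : IsCompl (LinearMap.ker B) Vdot) {P : Set V} {a : V} (ha : a ∈ P) :
    reflEquiv (formT B Vdot hc) (a, 0) ∈ weylTilde B Vdot hc P :=
  Subgroup.subset_closure ⟨a, ha, rfl⟩

/-- The orbit of `a ∈ V ⊆ Ṽ` under the group generated by the reflections based
on the elements of `G`. -/
def orbitT (B : LinearMap.BilinForm ℝ V) (Vdot : Submodule ℝ V)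
    (hc : IsCompl (LinearMap.ker B) Vdot) (G : Set V) (a : V) : Set V :=
  {x | ∃ w ∈ weylTilde B Vdot hc G, w (a, 0) = (x, 0)}

/-- The set `W_G ⬝ P` computed inside `Ṽ`. -/
def dotSetT (B : LinearMap.BilinForm ℝ V) (Vdot : Submodule ℝ V)
    (hc : IsCompl (LinearMap.ker B) Vdot) (G P : Set V) : Set V :=
  {x | ∃ w ∈ weylTilde B Vdot hc G, ∃ a ∈ P, w (a, 0) = (x, 0)}

/-- `R` is a minimal extended affine root system: for every `α ∈ R^×`,
`W_{R^× ∖ Wα}` is a proper subgroup of `W`. -/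
def IsMinimalEARS (B : LinearMap.BilinForm ℝ V) (Vdot : Submodule ℝ V)
    (hc : IsCompl (LinearMap.ker B) Vdot) (R : Set V) : Prop :=
  ∀ a ∈ nonIso B R,
    weylTilde B Vdot hc (nonIso B R \ orbitT B Vdot hc (nonIso B R) a)
      < weylTilde B Vdot hc (nonIso B R)

/-- The defining relators of the conjugation presented group `Ŵ`:
`ŵ_α² = 1` and `ŵ_α ŵ_β ŵ_α = ŵ_{w_α(β)}`, for `α, β ∈ R^×`. -/
def conjRels (B : LinearMap.BilinForm ℝ V) (R : Set V) :
    Set (FreeGroup ↥(nonIso B R)) :=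
  {r | (∃ a : ↥(nonIso B R), r = FreeGroup.of a * FreeGroup.of a) ∨
      (∃ a b c : ↥(nonIso B R), (c : V) = reflMap B (a : V) (b : V) ∧
        r = FreeGroup.of a * FreeGroup.of b * FreeGroup.of a * (FreeGroup.of c)⁻¹)}

/-- The conjugation presented group `Ŵ` associated with `R`. -/
abbrev WHat (B : LinearMap.BilinForm ℝ V) (R : Set V) := PresentedGroup (conjRels B R)

/-- The generator `ŵ_α` of `Ŵ`. -/
def wHat (B : LinearMap.BilinForm ℝ V) (R : Set V) (a : ↥(nonIso B R)) : WHat B R :=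
  PresentedGroup.of a

/-- `W` has the presentation by conjugation: the canonical epimorphism
`ψ : Ŵ → W`, `ŵ_α ↦ w_α` is an isomorphism. -/
def HasPresByConj (B : LinearMap.BilinForm ℝ V) (Vdot : Submodule ℝ V)
    (hc : IsCompl (LinearMap.ker B) Vdot) (R : Set V) : Prop :=
  ∃ ψ : WHat B R →* ↥(weylTilde B Vdot hc (nonIso B R)),
    (∀ a : ↥(nonIso B R),
      ((ψ (wHat B R a) : (VT B) ≃ₗ[ℝ] (VT B))) =
        reflEquiv (formT B Vdot hc) ((a : V), 0)) ∧
    Function.Bijective ψ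

/-- The restriction of the form to a subspace. -/
def restrictForm (B : LinearMap.BilinForm ℝ V) (U : Submodule ℝ V) :
    LinearMap.BilinForm ℝ ↥U := B.compl₁₂ U.subtype U.subtype

/-- The root system `R_P = R_P^n ∪ R_P^i` associated with a subset `P ⊆ R^×`,
where `R_P^n = W_P ⬝ P` and `R_P^i = (R_P^n - R_P^n) ∩ R⁰`. -/
def earsOf (B : LinearMap.BilinForm ℝ V) (R P : Set V) : Set V :=
  reflOrbit B P ∪
    ((reflOrbit B P - reflOrbit B P) ∩ (R ∩ (LinearMap.ker B : Set V)))

/-- The subgroup `2⟨R⟩` of `⟨R⟩`. -/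
def twoLat (R : Set V) : AddSubgroup V :=
  AddSubgroup.map (AddMonoidHom.mk' (fun x : V => x + x) (fun a b => by abel))
    (AddSubgroup.closure R)


/-! ### Auxiliary lemmas -/

section AuxBasic

variable {V : Type*} [AddCommGroup V] [Module ℝ V]
variable (B : LinearMap.BilinForm ℝ V)

/-- For a positive semidefinite symmetric form, isotropic vectors pair to zero
with everything. -/
lemma aux_isotropic_pair (hsym : ∀ x y : V, B x y = B y x)
    (hpos : ∀ x : V, 0 ≤ B x x) {v : V} (hv : B v v = 0) (w : V) : B v w = 0 := by
  by_contra hne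
  have key : ∀ t : ℝ, 0 ≤ B w w + 2 * t * B v w := by
    intro t
    have h0 := hpos (w + t • v)
    have : B (w + t • v) (w + t • v) = B w w + 2 * t * B v w := by
      simp only [map_add, map_smul, LinearMap.add_apply, LinearMap.smul_apply, smul_eq_mul]
      rw [hsym w v, hv]
      ring
    linarith [this ▸ h0]
  have := key (-(B w w + 1) / (2 * B v w))
  have h2 : (2 : ℝ) * B v w ≠ 0 := by
    intro h; apply hne; linarith [mul_eq_zero.mp h]
  have heq : 2 * (-(B w w + 1) / (2 * B v w)) * B v w = -(B w w + 1) := by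
    field_simp
  rw [heq] at this
  linarith

lemma aux_isotropic_mem_ker (hsym : ∀ x y : V, B x y = B y x)
    (hpos : ∀ x : V, 0 ≤ B x x) {v : V} (hv : B v v = 0) :
    v ∈ LinearMap.ker B := by
  rw [LinearMap.mem_ker]
  ext w
  simpa using aux_isotropic_pair B hsym hpos hv w

/-- Reflections preserve the form value `B x x`. -/
lemma aux_reflMap_norm (hsym : ∀ x y : V, B x y = B y x) (a x : V) :
    B (reflMap B a x) (reflMap B a x) = B x x := by
  rcases eq_or_ne (B a a) 0 with h | h
  · simp [reflMap_apply, h]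
  · rw [reflMap_apply]
    simp only [map_sub, map_smul, LinearMap.sub_apply, LinearMap.smul_apply, smul_eq_mul]
    rw [hsym a x]
    field_simp
    ring

/-- Reflections are self-adjoint for the form. -/
lemma aux_reflMap_adj (hsym : ∀ x y : V, B x y = B y x) (a x y : V) :
    B (reflMap B a x) y = B x (reflMap B a y) := by
  rw [reflMap_apply, reflMap_apply]
  simp only [map_sub, map_smul, LinearMap.sub_apply, LinearMap.smul_apply, smul_eq_mul]
  rw [hsym a y, hsym x a]
  ring

end AuxBasic

section AuxVT

variable {V : Type*} [AddCommGroup V] [Module ℝ V]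
variable (B : LinearMap.BilinForm ℝ V) (Vdot : Submodule ℝ V)
variable (hc : IsCompl (LinearMap.ker B) Vdot)

/-- The form `formT` evaluated on two embedded vectors. -/
lemma aux_formT_emb (a b : V) :
    formT B Vdot hc (a, 0) (b, 0) = B a b := by
  simp [formT]

/-- The tilde reflection of an embedded vector. -/
lemma aux_rT_emb (a x : V) :
    reflEquiv (formT B Vdot hc) (a, 0) (x, 0) = ((reflMap B a x : V), (0 : Module.Dual ℝ ↥(LinearMap.ker B))) := by
  rw [reflEquiv_apply, reflMap_apply, reflMap_apply, aux_formT_emb, aux_formT_emb]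
  ext
  · simp
  · simp

/-- The tilde reflection applied to a general element of `VT`. -/
lemma aux_rT_apply (a : V) (x : VT B) :
    reflEquiv (formT B Vdot hc) (a, 0) x
      = x - (2 / B a a * formT B Vdot hc x (a, 0)) • ((a, 0) : VT B) := by
  rw [reflEquiv_apply, reflMap_apply, aux_formT_emb]

/-- Product of the tilde reflections along a list of vectors. -/
def El (l : List V) : (VT B) ≃ₗ[ℝ] (VT B) :=
  (l.map (fun a => reflEquiv (formT B Vdot hc) (a, 0))).prod

lemma aux_El_nil : El B Vdot hc ([] : List V) = 1 := rfl

lemma aux_El_singleton (a : V) :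
    El B Vdot hc [a] = reflEquiv (formT B Vdot hc) (a, 0) := by
  simp [El]

lemma aux_El_append (l₁ l₂ : List V) :
    El B Vdot hc (l₁ ++ l₂) = El B Vdot hc l₁ * El B Vdot hc l₂ := by
  simp [El]

lemma aux_El_cons (a : V) (l : List V) (x : VT B) :
    El B Vdot hc (a :: l) x
      = reflEquiv (formT B Vdot hc) (a, 0) (El B Vdot hc l x) := rfl

lemma aux_rT_invol (a : V) :
    reflEquiv (formT B Vdot hc) (a, 0) * reflEquiv (formT B Vdot hc) (a, 0) = 1 := by
  apply LinearEquiv.toLinearMap_injective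
  apply LinearMap.ext
  intro x
  show reflEquiv (formT B Vdot hc) (a, 0) (reflEquiv (formT B Vdot hc) (a, 0) x) = x
  rw [reflEquiv_apply, reflEquiv_apply]
  exact reflMap_invol _ _ x

lemma aux_El_reverse_mul (l : List V) :
    El B Vdot hc l.reverse * El B Vdot hc l = 1 := by
  induction l with
  | nil => simp [aux_El_nil]
  | cons a l ih =>
      have h1 : (a :: l).reverse = l.reverse ++ [a] := by simp
      have h2 : El B Vdot hc (a :: l) = El B Vdot hc [a] * El B Vdot hc l := by
        have : a :: l = [a] ++ l := rfl
        rw [this, aux_El_append]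
      rw [h1, aux_El_append, h2, aux_El_singleton, mul_assoc,
        ← mul_assoc (reflEquiv (formT B Vdot hc) (a, 0)), aux_rT_invol, one_mul, ih]

/-- Every element of `weylTilde P` is a product of reflections along a list in `P`. -/
lemma aux_exists_word {P : Set V} {w : (VT B) ≃ₗ[ℝ] (VT B)}
    (hw : w ∈ weylTilde B Vdot hc P) :
    ∃ l : List V, (∀ a ∈ l, a ∈ P) ∧ w = El B Vdot hc l := by
  induction hw using Subgroup.closure_induction with
  | mem x hx =>
      obtain ⟨a, ha, rfl⟩ := hx
      exact ⟨[a], by simpa using ha, (aux_El_singleton B Vdot hc a).symm⟩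
  | one => exact ⟨[], by simp, rfl⟩
  | mul x y hx hy ihx ihy =>
      obtain ⟨l₁, h₁, rfl⟩ := ihx
      obtain ⟨l₂, h₂, rfl⟩ := ihy
      refine ⟨l₁ ++ l₂, ?_, (aux_El_append B Vdot hc l₁ l₂).symm⟩
      intro a ha
      rcases List.mem_append.mp ha with h | h
      exacts [h₁ a h, h₂ a h]
  | inv x hx ihx =>
      obtain ⟨l, h₁, rfl⟩ := ihx
      refine ⟨l.reverse, fun a ha => h₁ a (List.mem_reverse.mp ha), ?_⟩
      exact (eq_inv_of_mul_eq_one_left (aux_El_reverse_mul B Vdot hc l)).symm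

end AuxVT

section AuxWord

variable {V : Type*} [AddCommGroup V] [Module ℝ V]
variable (B : LinearMap.BilinForm ℝ V) (Vdot : Submodule ℝ V)
variable (hc : IsCompl (LinearMap.ker B) Vdot)
variable (R : Set V) (P : Set V)

/-- Displacement lemma: a word in reflections from `P` moves a root `β` to another
root embedded in `V × 0`, displaced by an element of `⟨P⟩`. -/
lemma aux_lemD (hR : IsEARS B R) (hPx : P ⊆ nonIso B R) :
    ∀ l : List V, (∀ a ∈ l, a ∈ P) → ∀ β ∈ R,
      ∃ w ∈ R, El B Vdot hc l ((β, 0) : VT B) = (w, 0) ∧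
        w - β ∈ AddSubgroup.closure P := by
  intro l
  induction l with
  | nil =>
      intro _ β hβ
      refine ⟨β, hβ, rfl, ?_⟩
      rw [sub_self]
      exact zero_mem _
  | cons a l ih =>
      intro hmem β hβ
      have ha : a ∈ P := hmem a List.mem_cons_self
      obtain ⟨w, hwR, hweq, hwd⟩ := ih (fun x hx => hmem x (List.mem_cons_of_mem a hx)) β hβ
      rw [aux_El_cons, hweq, aux_rT_emb]
      have hk : ∃ k : ℤ, 2 / B a a * B w a = (k : ℝ) := by
        rcases eq_or_ne (B w w) 0 with h0 | h0
        · refine ⟨0, ?_⟩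
          have : B w a = 0 := aux_isotropic_pair B hR.symm hR.posSemidef h0 a
          simp [this]
        · obtain ⟨k, hk⟩ := hR.integrality a (hPx ha) w ⟨hwR, h0⟩
          exact ⟨k, by rw [div_mul_eq_mul_div, mul_comm (2:ℝ) (B w a), ← hk]; ring⟩
      obtain ⟨k, hk⟩ := hk
      refine ⟨reflMap B a w, hR.reflInvariant a (hPx ha) w hwR, rfl, ?_⟩
      rw [reflMap_apply, hk]
      have : w - (k : ℝ) • a - β = (w - β) - k • a := by
        rw [Int.cast_smul_eq_zsmul]; abel
      rw [this]
      exact sub_mem hwd (AddSubgroup.zsmul_mem _ (AddSubgroup.subset_closure ha) k)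

/-- Word expansion lemma: a word in reflections from `P` acts as the identity minus a
sum of rank-one terms whose functional parts are letters of `P` and whose vector parts
lie in `⟨P⟩`. -/
lemma aux_lemW (hR : IsEARS B R) (hPx : P ⊆ nonIso B R) :
    ∀ l : List V, (∀ a ∈ l, a ∈ P) →
      ∃ prs : List (V × V),
        (∀ pr ∈ prs, pr.1 ∈ P ∧ pr.2 ∈ AddSubgroup.closure P) ∧
        ∀ x : VT B,
          El B Vdot hc l x = x - (prs.map (fun pr =>
            (2 / B pr.1 pr.1 * formT B Vdot hc x (pr.1, 0)) • ((pr.2, 0) : VT B))).sum := by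
  intro l
  induction l using List.reverseRecOn with
  | nil =>
      intro _
      exact ⟨[], by simp, fun x => by simp [aux_El_nil]⟩
  | append_singleton l a ih =>
      intro hmem
      have hl : ∀ b ∈ l, b ∈ P := fun b hb => hmem b (List.mem_append_left _ hb)
      have ha : a ∈ P := hmem a (List.mem_append_right _ (List.mem_singleton_self a))
      obtain ⟨prs, hprs, hid⟩ := ih hl
      have haR : a ∈ R := (hPx ha).1
      obtain ⟨w, hwR, hweq, hwd⟩ := aux_lemD B Vdot hc R P hR hPx l hl a haR
      refine ⟨prs ++ [(a, w)], ?_, ?_⟩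
      · intro pr hpr
        rcases List.mem_append.mp hpr with h | h
        · exact hprs pr h
        · rw [List.mem_singleton.mp h]
          refine ⟨ha, ?_⟩
          have : w = (w - a) + a := by abel
          rw [this]
          exact add_mem hwd (AddSubgroup.subset_closure ha)
      · intro x
        rw [aux_El_append, aux_El_singleton]
        show El B Vdot hc l (reflEquiv (formT B Vdot hc) (a, 0) x) = _
        rw [aux_rT_apply, map_sub, map_smul, hid, hweq, List.map_append, List.sum_append]
        simp only [List.map_singleton, List.sum_singleton]
        abel

end AuxWord

section AuxGroup

variable {G : Type*} [Group G]

lemma aux_commute_closure {A B' : Set G} (h : ∀ x ∈ A, ∀ y ∈ B', Commute x y) :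
    ∀ u ∈ Subgroup.closure A, ∀ v ∈ Subgroup.closure B', Commute u v := by
  have step : ∀ x ∈ A, ∀ v ∈ Subgroup.closure B', Commute x v := by
    intro x hx v hv
    induction hv using Subgroup.closure_induction with
    | mem y hy => exact h x hx y hy
    | one => exact Commute.one_right x
    | mul y z _ _ ihy ihz => exact Commute.mul_right ihy ihz
    | inv y _ ihy => exact Commute.inv_right ihy
  intro u hu
  induction hu using Subgroup.closure_induction with
  | mem x hx => exact step x hx
  | one => exact fun v _ => Commute.one_left v
  | mul x y _ _ ihx ihy => exact fun v hv => Commute.mul_left (ihx v hv) (ihy v hv)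
  | inv x _ ihx => exact fun v hv => Commute.inv_left (ihx v hv)

lemma aux_decomp {A B' : Set G} (h : ∀ x ∈ A, ∀ y ∈ B', Commute x y)
    {w : G} (hw : w ∈ Subgroup.closure (A ∪ B')) :
    ∃ u ∈ Subgroup.closure A, ∃ v ∈ Subgroup.closure B', w = u * v := by
  have hcomm := aux_commute_closure h
  induction hw using Subgroup.closure_induction with
  | mem x hx =>
      rcases hx with hx | hx
      · exact ⟨x, Subgroup.subset_closure hx, 1, one_mem _, (mul_one x).symm⟩
      · exact ⟨1, one_mem _, x, Subgroup.subset_closure hx, (one_mul x).symm⟩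
  | one => exact ⟨1, one_mem _, 1, one_mem _, (one_mul 1).symm⟩
  | mul x y _ _ ihx ihy =>
      obtain ⟨u₁, hu₁, v₁, hv₁, rfl⟩ := ihx
      obtain ⟨u₂, hu₂, v₂, hv₂, rfl⟩ := ihy
      refine ⟨u₁ * u₂, mul_mem hu₁ hu₂, v₁ * v₂, mul_mem hv₁ hv₂, ?_⟩
      have hcv : Commute u₂ v₁ := (hcomm u₂ hu₂ v₁ hv₁)
      rw [mul_assoc, ← mul_assoc v₁, ← hcv.eq]
      group
  | inv x _ ihx =>
      obtain ⟨u, hu, v, hv, rfl⟩ := ihx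
      refine ⟨u⁻¹, inv_mem hu, v⁻¹, inv_mem hv, ?_⟩
      rw [mul_inv_rev, (hcomm u hu v hv).inv_inv.eq]

end AuxGroup

section AuxConn

variable {V : Type*} [AddCommGroup V] [Module ℝ V]
variable (B : LinearMap.BilinForm ℝ V) (Vdot : Submodule ℝ V)
variable (hc : IsCompl (LinearMap.ker B) Vdot)

/-- Reflections along orthogonal vectors commute. -/
lemma aux_rT_commute (hsym : ∀ x y : V, B x y = B y x) {a b : V} (horth : B a b = 0) :
    Commute (reflEquiv (formT B Vdot hc) (a, 0)) (reflEquiv (formT B Vdot hc) (b, 0)) := by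
  have hab : formT B Vdot hc ((a, 0) : VT B) ((b, 0) : VT B) = 0 := by
    rw [aux_formT_emb]; exact horth
  have hba : formT B Vdot hc ((b, 0) : VT B) ((a, 0) : VT B) = 0 := by
    rw [aux_formT_emb, hsym]; exact horth
  apply LinearEquiv.toLinearMap_injective
  apply LinearMap.ext
  intro x
  show reflEquiv _ (a,0) (reflEquiv _ (b,0) x) = reflEquiv _ (b,0) (reflEquiv _ (a,0) x)
  rw [aux_rT_apply, aux_rT_apply, aux_rT_apply, aux_rT_apply]
  simp only [map_sub, map_smul, LinearMap.sub_apply, LinearMap.smul_apply, smul_eq_mul,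
    hab, hba, mul_zero, zero_smul, sub_zero]
  abel

/-- A word in reflections moves any vector within the span of the letters. -/
lemma aux_lemS (S0 : Set V) :
    ∀ l : List V, (∀ a ∈ l, a ∈ S0) → ∀ x : VT B,
      El B Vdot hc l x - x ∈ Submodule.span ℝ ((fun a => ((a, 0) : VT B)) '' S0) := by
  intro l
  induction l with
  | nil => intro _ x; simp [aux_El_nil]
  | cons a l ih =>
      intro hmem x
      have ha : a ∈ S0 := hmem a List.mem_cons_self
      have hx := ih (fun b hb => hmem b (List.mem_cons_of_mem a hb)) x
      rw [aux_El_cons, aux_rT_apply]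
      have : El B Vdot hc l x - (2 / B a a * formT B Vdot hc (El B Vdot hc l x) (a, 0)) •
          ((a, 0) : VT B) - x
          = (El B Vdot hc l x - x) - (2 / B a a * formT B Vdot hc (El B Vdot hc l x) (a, 0)) •
          ((a, 0) : VT B) := by abel
      rw [this]
      refine sub_mem hx (Submodule.smul_mem _ _ (Submodule.subset_span ?_))
      exact ⟨a, ha, rfl⟩

/-- Projection of a span membership from `VT` down to `V`. -/
lemma aux_span_fst {S0 : Set V} {x : V}
    (hx : ((x, 0) : VT B) ∈ Submodule.span ℝ ((fun a => ((a, 0) : VT B)) '' S0)) :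
    x ∈ Submodule.span ℝ S0 := by
  have hmap := Submodule.apply_mem_span_image_of_mem_span
    (s := (fun a => ((a, 0) : VT B)) '' S0) (LinearMap.fst ℝ V (Module.Dual ℝ ↥(LinearMap.ker B))) hx
  rw [Set.image_image] at hmap
  simpa using hmap

/-- Orthogonality of spans. -/
lemma aux_span_orth {S₁ S₂ : Set V} (h : ∀ a ∈ S₁, ∀ b ∈ S₂, B a b = 0) :
    ∀ x ∈ Submodule.span ℝ S₁, ∀ y ∈ Submodule.span ℝ S₂, B x y = 0 := by
  have inner : ∀ a ∈ S₁, ∀ y ∈ Submodule.span ℝ S₂, B a y = 0 := by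
    intro a ha y hy
    induction hy using Submodule.span_induction with
    | mem b hb => exact h a ha b hb
    | zero => simp
    | add y z _ _ ihy ihz => rw [map_add, ihy, ihz, add_zero]
    | smul c y _ ihy => rw [map_smul, ihy, smul_zero]
  intro x hx
  induction hx using Submodule.span_induction with
  | mem a ha => exact inner a ha
  | zero => intro y _; simp
  | add x z _ _ ihx ihz => intro y hy; rw [map_add, LinearMap.add_apply, ihx y hy, ihz y hy, add_zero]
  | smul c x _ ihx => intro y hy; rw [map_smul, LinearMap.smul_apply, ihx y hy, smul_zero]

end AuxConn

section AuxO

variable {V : Type*} [AddCommGroup V] [Module ℝ V]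
variable (B : LinearMap.BilinForm ℝ V) (R : Set V)

/-- The set of roots of square length `n` all of whose integral pairings are even. -/
def OSet (n : ℝ) : Set V :=
  {γ | γ ∈ nonIso B R ∧ B γ γ = n ∧
    ∀ β ∈ nonIso B R, ∃ k : ℤ, 2 * B β γ / B γ γ = 2 * (k : ℝ)}

lemma aux_reflMap_self {a : V} (ha : B a a ≠ 0) : reflMap B a a = -a := by
  rw [reflMap_apply, div_mul_cancel₀ _ ha]
  rw [two_smul]
  abel

lemma aux_reflMap_nonIso (hR : IsEARS B R) {a x : V} (ha : a ∈ nonIso B R)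
    (hx : x ∈ nonIso B R) : reflMap B a x ∈ nonIso B R := by
  refine ⟨hR.reflInvariant a ha x hx.1, ?_⟩
  rw [aux_reflMap_norm B hR.symm]
  exact hx.2

lemma aux_neg_nonIso (hR : IsEARS B R) {a : V} (ha : a ∈ nonIso B R) :
    -a ∈ nonIso B R := by
  have := aux_reflMap_nonIso B R hR ha ha
  rwa [aux_reflMap_self B ha.2] at this

lemma aux_reflMap_ker_fix {a κ : V} (hκ : κ ∈ LinearMap.ker B) :
    reflMap B a κ = κ := by
  rw [reflMap_apply]
  have : B κ a = 0 := by
    rw [LinearMap.mem_ker] at hκ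
    rw [hκ]; rfl
  rw [this, mul_zero, zero_smul, sub_zero]

lemma aux_O_stable (hR : IsEARS B R) {n : ℝ} {γ b : V} (hγ : γ ∈ OSet B R n)
    (hb : b ∈ nonIso B R) : reflMap B b γ ∈ OSet B R n := by
  obtain ⟨hγn, hγe, hγE⟩ := hγ
  refine ⟨aux_reflMap_nonIso B R hR hb hγn, ?_, ?_⟩
  · rw [aux_reflMap_norm B hR.symm]; exact hγe
  · intro β hβ
    rw [aux_reflMap_norm B hR.symm, ← aux_reflMap_adj B hR.symm]
    exact hγE (reflMap B b β) (aux_reflMap_nonIso B R hR hb hβ)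

/-- Two nonorthogonal elements of an `OSet` agree up to sign modulo the radical. -/
lemma aux_O1 (hR : IsEARS B R) {n : ℝ} {γ δ : V} (hγ : γ ∈ OSet B R n)
    (hδ : δ ∈ OSet B R n) (hne : B γ δ ≠ 0) :
    γ - δ ∈ LinearMap.ker B ∨ γ + δ ∈ LinearMap.ker B := by
  obtain ⟨hγn, hγe, _⟩ := hγ
  obtain ⟨hδn, hδe, hδE⟩ := hδ
  have hn0 : n ≠ 0 := hγe ▸ hγn.2
  have hnpos : 0 < n := lt_of_le_of_ne (hγe ▸ hR.posSemidef γ) (Ne.symm hn0)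
  obtain ⟨k, hk⟩ := hδE γ hγn
  rw [hδe] at hk
  have hBγδ : B γ δ = (k : ℝ) * n := by
    field_simp at hk
    linarith [hk]
  have hBδγ : B δ γ = (k : ℝ) * n := by rw [hR.symm δ γ]; exact hBγδ
  have hsub : B (γ - δ) (γ - δ) = 2 * n - 2 * (k : ℝ) * n := by
    simp only [map_sub, LinearMap.sub_apply]
    rw [hγe, hδe, hBγδ, hBδγ]; ring
  have hadd : B (γ + δ) (γ + δ) = 2 * n + 2 * (k : ℝ) * n := by
    simp only [map_add, LinearMap.add_apply]
    rw [hγe, hδe, hBγδ, hBδγ]; ring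
  have hk1 : (k : ℝ) ≤ 1 := by nlinarith [hR.posSemidef (γ - δ), hsub]
  have hk2 : (-1 : ℝ) ≤ (k : ℝ) := by nlinarith [hR.posSemidef (γ + δ), hadd]
  have hk0 : k ≠ 0 := by
    rintro rfl
    simp at hBγδ
    exact hne hBγδ
  have : k = 1 ∨ k = -1 := by
    have h1 : k ≤ 1 := by exact_mod_cast hk1
    have h2 : (-1 : ℤ) ≤ k := by exact_mod_cast hk2
    omega
  rcases this with rfl | rfl
  · left
    apply aux_isotropic_mem_ker B hR.symm hR.posSemidef
    rw [hsub]; push_cast; ring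
  · right
    apply aux_isotropic_mem_ker B hR.symm hR.posSemidef
    rw [hadd]; push_cast; ring

end AuxO

section AuxT

variable {V : Type*} [AddCommGroup V] [Module ℝ V] [FiniteDimensional ℝ V]
variable (B : LinearMap.BilinForm ℝ V) (R : Set V)

lemma aux_T_card (hR : IsEARS B R) {n : ℝ} (hn0 : n ≠ 0) {T : Finset V}
    (hTO : ∀ t ∈ T, t ∈ OSet B R n)
    (horth : ∀ t ∈ T, ∀ t' ∈ T, t ≠ t' → B t t' = 0) :
    T.card ≤ Module.finrank ℝ V := by
  have hli : LinearIndependent ℝ (fun t : ↥T => (t : V)) := by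
    rw [Fintype.linearIndependent_iff]
    intro g hg i₀
    have h0 : B (∑ i : ↥T, g i • (i : V)) (i₀ : V) = 0 := by rw [hg]; simp
    rw [map_sum, LinearMap.sum_apply] at h0
    have hsum : ∀ i : ↥T, i ≠ i₀ → (B (g i • (i : V))) (i₀ : V) = 0 := by
      intro i hi
      have : B (i : V) (i₀ : V) = 0 := by
        apply horth i i.2 i₀ i₀.2
        exact fun h => hi (Subtype.ext h)
      rw [map_smul, LinearMap.smul_apply, this, smul_zero]
    rw [Finset.sum_eq_single i₀ (fun i _ hi => hsum i hi) (fun h => absurd (Finset.mem_univ i₀) h)] at h0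
    rw [map_smul, LinearMap.smul_apply, (hTO i₀ i₀.2).2.1, smul_eq_mul] at h0
    exact (mul_eq_zero.mp h0).resolve_right hn0
  have := hli.fintype_card_le_finrank
  rwa [Fintype.card_coe] at this

/-- Existence of a maximal pairwise-orthogonal subfamily of an `OSet` containing `α`. -/
lemma aux_exists_T (hR : IsEARS B R) {n : ℝ} (hn0 : n ≠ 0) {α : V}
    (hα : α ∈ OSet B R n) :
    ∃ T : Finset V, (∀ t ∈ T, t ∈ OSet B R n) ∧ α ∈ T ∧
      (∀ t ∈ T, ∀ t' ∈ T, t ≠ t' → B t t' = 0) ∧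
      (∀ γ ∈ OSet B R n, ∃ t ∈ T, B γ t ≠ 0) := by
  classical
  set N := Module.finrank ℝ V with hN
  set Pm : ℕ → Prop := fun m => ∃ T : Finset V,
    ((∀ t ∈ T, t ∈ OSet B R n) ∧ α ∈ T ∧
      (∀ t ∈ T, ∀ t' ∈ T, t ≠ t' → B t t' = 0)) ∧ T.card = m with hPm
  have h1 : Pm 1 := by
    refine ⟨{α}, ⟨?_, Finset.mem_singleton_self α, ?_⟩, Finset.card_singleton α⟩
    · intro t ht; rw [Finset.mem_singleton] at ht; rwa [ht]
    · intro t ht t' ht' hne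
      rw [Finset.mem_singleton] at ht ht'
      exact absurd (ht.trans ht'.symm) hne
  have hα0 : α ≠ 0 := by
    intro h
    apply hα.1.2
    rw [h]; simp
  have h1N : 1 ≤ N := by
    have : Nontrivial V := nontrivial_of_ne α 0 hα0
    have : 0 < N := hN ▸ Module.finrank_pos
    omega
  have hspec : Pm (Nat.findGreatest Pm N) := Nat.findGreatest_spec h1N h1
  obtain ⟨T, ⟨hTO, hαT, horth⟩, hcard⟩ := hspec
  refine ⟨T, hTO, hαT, horth, ?_⟩
  by_contra hcov
  push_neg at hcov
  obtain ⟨γ, hγO, hγorth⟩ := hcov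
  have hγT : γ ∉ T := fun h => hγO.1.2 (hγorth γ h)
  have hmem : ∀ t ∈ insert γ T, t ∈ OSet B R n := by
    intro t ht
    rcases Finset.mem_insert.mp ht with heq | ht
    · rw [heq]; exact hγO
    · exact hTO t ht
  have hpair : ∀ t ∈ insert γ T, ∀ t' ∈ insert γ T, t ≠ t' → B t t' = 0 := by
    intro t ht t' ht' hne
    rcases Finset.mem_insert.mp ht with heq | ht
    · rcases Finset.mem_insert.mp ht' with heq' | ht'
      · exact absurd (heq.trans heq'.symm) hne
      · rw [heq]; exact hγorth t' ht'
    · rcases Finset.mem_insert.mp ht' with heq' | ht'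
      · rw [heq', hR.symm]; exact hγorth t ht
      · exact horth t ht t' ht' hne
  have hP' : Pm (T.card + 1) := by
    exact ⟨insert γ T, ⟨hmem, Finset.mem_insert_of_mem hαT, hpair⟩,
      Finset.card_insert_of_notMem hγT⟩
  have hbound : T.card + 1 ≤ N := by
    have := aux_T_card B R hR hn0 (T := insert γ T) hmem hpair
    rwa [Finset.card_insert_of_notMem hγT] at this
  exact Nat.findGreatest_is_greatest (by omega) hbound hP'

end AuxT

section AuxParity

variable {V : Type*} [AddCommGroup V] [Module ℝ V]
variable (B : LinearMap.BilinForm ℝ V) (R : Set V)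

lemma aux_ker_left {κ : V} (hκ : κ ∈ LinearMap.ker B) (z : V) : B κ z = 0 := by
  rw [LinearMap.mem_ker] at hκ
  rw [hκ]; rfl

lemma aux_ker_right (hsym : ∀ x y : V, B x y = B y x) {κ : V}
    (hκ : κ ∈ LinearMap.ker B) (z : V) : B z κ = 0 := by
  rw [hsym]; exact aux_ker_left B hκ z

/-- Uniqueness of the member of a pairwise orthogonal family pairing nontrivially
with a given element of the `OSet`. -/
lemma aux_T_uniq (hR : IsEARS B R) {n : ℝ} {T : Finset V}
    (hTO : ∀ t ∈ T, t ∈ OSet B R n)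
    (horth : ∀ t ∈ T, ∀ t' ∈ T, t ≠ t' → B t t' = 0)
    {γ t' t'' : V} (hγ : γ ∈ OSet B R n) (ht' : t' ∈ T) (ht'' : t'' ∈ T)
    (h1 : B γ t' ≠ 0) (h2 : B γ t'' ≠ 0) : t' = t'' := by
  by_contra hne
  have horth' : B t' t'' = 0 := horth t' ht' t'' ht'' hne
  have hn : B t' t' = n := (hTO t' ht').2.1
  have hn0 : n ≠ 0 := hn ▸ (hTO t' ht').1.2
  have c1 := aux_O1 B R hR hγ (hTO t' ht') h1
  have c2 := aux_O1 B R hR hγ (hTO t'' ht'') h2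
  have key : ∀ κ ∈ LinearMap.ker B, t'' = κ + t' ∨ t'' = κ - t' → False := by
    intro κ hκ h
    rcases h with h | h
    · rw [h, map_add, aux_ker_right B hR.symm hκ, hn, zero_add] at horth'
      exact hn0 horth'
    · rw [h, map_sub, aux_ker_right B hR.symm hκ, hn, zero_sub, neg_eq_zero] at horth'
      exact hn0 horth'
  rcases c1 with hk1 | hk1 <;> rcases c2 with hk2 | hk2
  · refine key ((γ - t') - (γ - t'')) (sub_mem hk1 hk2) (Or.inl ?_)
    abel
  · refine key ((γ + t'') - (γ - t')) (sub_mem hk2 hk1) (Or.inr ?_)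
    abel
  · refine key ((γ + t') - (γ - t'')) (sub_mem hk1 hk2) (Or.inr ?_)
    abel
  · refine key ((γ + t'') - (γ + t')) (sub_mem hk2 hk1) (Or.inl ?_)
    abel

end AuxParity

section AuxParity2

variable {V : Type*} [AddCommGroup V] [Module ℝ V]
variable (B : LinearMap.BilinForm ℝ V) (R : Set V)

/-- The key parity lemma: the sum of the integral pairings of a maximal orthogonal
family in an `OSet` against any root is even. -/
lemma aux_T_parity (hR : IsEARS B R) (hred : IsReduced B R) {n : ℝ} {T : Finset V}
    (hTO : ∀ t ∈ T, t ∈ OSet B R n)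
    (horth : ∀ t ∈ T, ∀ t' ∈ T, t ≠ t' → B t t' = 0)
    (hcov : ∀ γ ∈ OSet B R n, ∃ t ∈ T, B γ t ≠ 0)
    {β : V} (hβ : β ∈ nonIso B R) :
    ∃ M : ℤ, ∑ t ∈ T, (2 * B t β / B β β) = 2 * (M : ℝ) := by
  classical
  set k : V → ℤ := fun t =>
    if h : t ∈ nonIso B R then Classical.choose (hR.integrality β hβ t h) else 0 with hkdef
  have hk : ∀ t ∈ T, 2 * B t β / B β β = ((k t : ℤ) : ℝ) := by
    intro t ht
    have hni : t ∈ nonIso B R := (hTO t ht).1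
    rw [hkdef]
    simp only [dif_pos hni]
    exact Classical.choose_spec (hR.integrality β hβ t hni)
  have hsum : ∑ t ∈ T, (2 * B t β / B β β) = ((∑ t ∈ T, k t : ℤ) : ℝ) := by
    rw [Finset.sum_congr rfl hk]
    push_cast
    ring
  suffices h2 : (2 : ℤ) ∣ ∑ t ∈ T, k t by
    obtain ⟨M, hM⟩ := h2
    refine ⟨M, ?_⟩
    rw [hsum, hM]
    push_cast
    ring
  have hrt : ∀ t ∈ T, reflMap B β t ∈ OSet B R n :=
    fun t ht => aux_O_stable B R hR (hTO t ht) hβ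
  have hgex : ∀ t ∈ T, ∃ t' ∈ T, B (reflMap B β t) t' ≠ 0 :=
    fun t ht => hcov _ (hrt t ht)
  set g : (t : V) → t ∈ T → V := fun t ht => Classical.choose (hgex t ht) with hgdef
  have hgspec : ∀ (t : V) (ht : t ∈ T), g t ht ∈ T ∧ B (reflMap B β t) (g t ht) ≠ 0 := by
    intro t ht
    have h1 := (Classical.choose_spec (hgex t ht)).1
    have h2 := (Classical.choose_spec (hgex t ht)).2
    exact ⟨h1, h2⟩
  have hg_mem : ∀ (t : V) (ht : t ∈ T), g t ht ∈ T := fun t ht => (hgspec t ht).1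
  -- the reflection of `g t` pairs nontrivially back with `t`
  have hgback : ∀ (t : V) (ht : t ∈ T), B (reflMap B β (g t ht)) t ≠ 0 := by
    intro t ht
    have hO1 := aux_O1 B R hR (hrt t ht) (hTO _ (hg_mem t ht)) (hgspec t ht).2
    have hn' : B t t = n := (hTO t ht).2.1
    have hn0 : n ≠ 0 := hn' ▸ (hTO t ht).1.2
    rcases hO1 with hκ | hκ
    · have h2 : t - reflMap B β (g t ht) ∈ LinearMap.ker B := by
        have hfix : reflMap B β (reflMap B β t - g t ht) = reflMap B β t - g t ht :=
          aux_reflMap_ker_fix B hκ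
        have hexp : reflMap B β (reflMap B β t - g t ht)
            = t - reflMap B β (g t ht) := by
          rw [map_sub, reflMap_invol]
        rw [← hexp, hfix]
        exact hκ
      have hκ0 := aux_ker_left B h2 t
      simp only [map_sub, LinearMap.sub_apply] at hκ0
      intro h0
      rw [h0, hn'] at hκ0
      exact hn0 (by linarith)
    · have h2 : t + reflMap B β (g t ht) ∈ LinearMap.ker B := by
        have hfix : reflMap B β (reflMap B β t + g t ht) = reflMap B β t + g t ht :=
          aux_reflMap_ker_fix B hκ
        have hexp : reflMap B β (reflMap B β t + g t ht)
            = t + reflMap B β (g t ht) := by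
          rw [map_add, reflMap_invol]
        rw [← hexp, hfix]
        exact hκ
      have hκ0 := aux_ker_left B h2 t
      simp only [map_add, LinearMap.add_apply] at hκ0
      intro h0
      rw [h0, hn'] at hκ0
      exact hn0 (by linarith)
  -- involution property
  have hinv : ∀ (t : V) (ht : t ∈ T), g (g t ht) (hg_mem t ht) = t := by
    intro t ht
    exact aux_T_uniq B R hR hTO horth (hrt _ (hg_mem t ht)) (hg_mem _ (hg_mem t ht)) ht
      (hgspec _ (hg_mem t ht)).2 (hgback t ht)
  -- reflection of the base vector
  have hrtβ : ∀ t : V, B (reflMap B β t) β = - B t β := by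
    intro t
    rw [aux_reflMap_adj B hR.symm, aux_reflMap_self B hβ.2, map_neg]
  -- parity relation within a pair of the involution
  have hpar : ∀ (t : V) (ht : t ∈ T), k (g t ht) = k t ∨ k (g t ht) = - k t := by
    intro t ht
    have ht' := hg_mem t ht
    have hO1 := aux_O1 B R hR (hrt t ht) (hTO _ ht') (hgspec t ht).2
    rcases hO1 with hκ | hκ
    · right
      have hBt' : B (g t ht) β = - B t β := by
        have hκ0 := aux_ker_left B hκ β
        simp only [map_sub, LinearMap.sub_apply] at hκ0
        rw [hrtβ] at hκ0
        linarith
      have h1 := hk _ ht'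
      have h2 := hk t ht
      have : ((k (g t ht) : ℤ) : ℝ) = ((- k t : ℤ) : ℝ) := by
        rw [← h1]
        push_cast
        rw [← h2, hBt']
        ring
      exact_mod_cast this
    · left
      have hBt' : B (g t ht) β = B t β := by
        have hκ0 := aux_ker_left B hκ β
        simp only [map_add, LinearMap.add_apply] at hκ0
        rw [hrtβ] at hκ0
        linarith
      have h1 := hk _ ht'
      have h2 := hk t ht
      have : ((k (g t ht) : ℤ) : ℝ) = ((k t : ℤ) : ℝ) := by
        rw [← h1, ← h2, hBt']
      exact_mod_cast this
  -- fixed points of the involution have even pairing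
  have hfixed : ∀ (t : V) (ht : t ∈ T), ((k t : ℤ) : ZMod 2) ≠ 0 → g t ht ≠ t := by
    intro t ht hf heq
    have hodd : ¬ ((2 : ℤ) ∣ k t) := by
      intro hdvd
      exact hf ((ZMod.intCast_zmod_eq_zero_iff_dvd (k t) 2).mpr hdvd)
    have hBrt : B (reflMap B β t) t ≠ 0 := by
      have := (hgspec t ht).2
      rwa [heq] at this
    have hco : 2 / B β β * B t β = ((k t : ℤ) : ℝ) := by
      rw [← hk t ht]; ring
    have hc : reflMap B β t = t - ((k t : ℤ) : ℝ) • β := by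
      rw [reflMap_apply, hco]
    have hn' : B t t = n := (hTO t ht).2.1
    have hn0 : n ≠ 0 := hn' ▸ (hTO t ht).1.2
    have hO1 := aux_O1 B R hR (hrt t ht) (hTO t ht) hBrt
    rcases hO1 with hκ | hκ
    · -- reflMap B β t - t ∈ ker forces k t = 0
      have hmem : ((k t : ℤ) : ℝ) • β ∈ LinearMap.ker B := by
        have : ((k t : ℤ) : ℝ) • β = -(reflMap B β t - t) := by rw [hc]; abel
        rw [this]
        exact neg_mem hκ
      have h0 : ((k t : ℤ) : ℝ) * B β β = 0 := by
        have := aux_ker_left B hmem β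
        rwa [map_smul, LinearMap.smul_apply, smul_eq_mul] at this
      have : ((k t : ℤ) : ℝ) = 0 := (mul_eq_zero.mp h0).resolve_right hβ.2
      have : k t = 0 := by exact_mod_cast this
      exact hodd (this ▸ dvd_zero 2)
    · -- reflMap B β t + t ∈ ker: the reduced case analysis
      have hκeq : reflMap B β t + t = t + t - ((k t : ℤ) : ℝ) • β := by
        rw [hc]; abel
      have hBκt : B (reflMap B β t + t) t = 0 := aux_ker_left B hκ t
      have hexp : 2 * n - ((k t : ℤ) : ℝ) * B β t = 0 := by
        rw [hκeq] at hBκt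
        simp only [map_sub, map_add, map_smul, LinearMap.sub_apply, LinearMap.add_apply,
          LinearMap.smul_apply, smul_eq_mul] at hBκt
        rw [hn'] at hBκt
        linarith
      obtain ⟨k', hk'⟩ := (hTO t ht).2.2 β hβ
      have hBβt : B β t = (k' : ℝ) * n := by
        rw [hn'] at hk'
        field_simp at hk'
        linarith
      have hprod : k t * k' = 2 := by
        rw [hBβt] at hexp
        have hmain : ((k t : ℤ) : ℝ) * ((k' : ℤ) : ℝ) * n = 2 * n := by
          linear_combination -hexp
        have h2 := mul_right_cancel₀ hn0 hmain
        have : ((k t * k' : ℤ) : ℝ) = ((2 : ℤ) : ℝ) := by push_cast; linarith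
        exact_mod_cast this
      have hdvd : k t ∣ 2 := ⟨k', hprod.symm⟩
      have h2' : (k t).natAbs ∣ 2 := by
        have := Int.natAbs_dvd_natAbs.mpr hdvd
        simpa using this
      rcases (Nat.dvd_prime Nat.prime_two).mp h2' with h1 | h1
      · have hkcase : k t = 1 ∨ k t = -1 := by
          rcases Int.natAbs_eq (k t) with h | h
          · left; rw [h, h1]; rfl
          · right; rw [h, h1]; rfl
        rcases hkcase with hkt | hkt
        · apply hred
          refine ⟨β, hβ, t, (hTO t ht).1, ?_⟩
          have : β - (2:ℝ) • t = -(reflMap B β t + t) := by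
            rw [hc, hkt]
            push_cast
            module
          rw [this]
          exact neg_mem hκ
        · apply hred
          refine ⟨β, hβ, -t, aux_neg_nonIso B R hR (hTO t ht).1, ?_⟩
          have : β - (2:ℝ) • (-t) = reflMap B β t + t := by
            rw [hc, hkt]
            push_cast
            module
          rw [this]
          exact hκ
      · have hkcase : k t = 2 ∨ k t = -2 := by
          rcases Int.natAbs_eq (k t) with h | h
          · left; rw [h, h1]; rfl
          · right; rw [h, h1]; rfl
        rcases hkcase with hkt | hkt
        · exact hodd (by rw [hkt])
        · exact hodd (by rw [hkt]; exact ⟨-1, by ring⟩)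
  -- conclude via the involution on `ZMod 2`
  have hz : ∑ t ∈ T, ((k t : ℤ) : ZMod 2) = 0 := by
    apply Finset.sum_involution g ?_ hfixed hg_mem hinv
    intro t ht
    rcases hpar t ht with he | he
    · rw [he]
      exact CharTwo.add_self_eq_zero _
    · rw [he]
      push_cast
      ring
  have : ((∑ t ∈ T, k t : ℤ) : ZMod 2) = 0 := by
    push_cast
    exact hz
  exact (ZMod.intCast_zmod_eq_zero_iff_dvd _ 2).mp this

end AuxParity2

section AuxRho

variable {V : Type*} [AddCommGroup V] [Module ℝ V] [FiniteDimensional ℝ V]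
variable (B : LinearMap.BilinForm ℝ V) (R : Set V)

/-- Existence of a test vector with integral pairings against all roots and odd
pairing against `α`. -/
lemma aux_rho (hR : IsEARS B R) (hred : IsReduced B R)
    {α : V} (hα : α ∈ nonIso B R) :
    ∃ ρ : V, (∀ b ∈ nonIso B R, ∃ m : ℤ, 2 * B ρ b / B b b = (m : ℝ)) ∧
      (∃ m : ℤ, 2 * B ρ α / B α α = 2 * (m : ℝ) + 1) := by
  by_cases hE : ∀ β ∈ nonIso B R, ∃ k : ℤ, 2 * B β α / B α α = 2 * (k : ℝ)
  · -- the `E`-case: build the test vector from a maximal orthogonal family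
    have hαO : α ∈ OSet B R (B α α) := ⟨hα, rfl, hE⟩
    obtain ⟨T, hTO, hαT, horth, hcov⟩ := aux_exists_T B R hR hα.2 hαO
    refine ⟨(2⁻¹ : ℝ) • ∑ t ∈ T, t, ?_, ?_⟩
    · intro b hb
      obtain ⟨M, hM⟩ := aux_T_parity B R hR hred hTO horth hcov hb
      refine ⟨M, ?_⟩
      have hBsum : B ((2⁻¹ : ℝ) • ∑ t ∈ T, t) b = 2⁻¹ * ∑ t ∈ T, B t b := by
        rw [map_smul, LinearMap.smul_apply, smul_eq_mul, map_sum, LinearMap.sum_apply]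
      have hS : (2 / B b b) * ∑ t ∈ T, B t b = 2 * (M : ℝ) := by
        rw [Finset.mul_sum]
        rw [← hM]
        apply Finset.sum_congr rfl
        intro t _
        ring
      have hbb := hb.2
      have hS' : ∑ t ∈ T, B t b = (M : ℝ) * B b b := by
        field_simp at hS
        linarith
      rw [hBsum, hS']
      field_simp
    · refine ⟨0, ?_⟩
      have hsum : ∑ t ∈ T, B t α = B α α := by
        rw [Finset.sum_eq_single α (fun t htT htne => horth t htT α hαT htne)
          (fun h => absurd hαT h)]
      have hBsum : B ((2⁻¹ : ℝ) • ∑ t ∈ T, t) α = 2⁻¹ * B α α := by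
        rw [map_smul, LinearMap.smul_apply, smul_eq_mul, map_sum, LinearMap.sum_apply, hsum]
      rw [hBsum]
      have := hα.2
      field_simp
      norm_num
  · -- the non-`E` case: a root with odd pairing serves as test vector
    push_neg at hE
    obtain ⟨β, hβ, hodd⟩ := hE
    obtain ⟨m, hm⟩ := hR.integrality α hα β hβ
    rcases Int.even_or_odd m with he | ho
    · obtain ⟨c, hc⟩ := he
      exact absurd (by rw [hm, hc]; push_cast; ring) (hodd c)
    · obtain ⟨c, hc⟩ := ho
      refine ⟨β, fun b hb => hR.integrality b hb β hβ, ⟨c, ?_⟩⟩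
      rw [hm, hc]
      push_cast
      ring

end AuxRho

section AuxMain

variable {V : Type*} [AddCommGroup V] [Module ℝ V] [FiniteDimensional ℝ V]
variable (B : LinearMap.BilinForm ℝ V) (Vdot : Submodule ℝ V)
variable (hc : IsCompl (LinearMap.ker B) Vdot) (R P : Set V)

/-- The main lattice lemma: every nonisotropic root lies in the subgroup generated
by a reflection-generating subset `P` of `R^×`. -/
lemma aux_mem_closure (hR : IsEARS B R) (hred : IsReduced B R)
    (hPx : P ⊆ nonIso B R)
    (hgen : weylTilde B Vdot hc P = weylTilde B Vdot hc (nonIso B R))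
    {γ : V} (hγ : γ ∈ nonIso B R) : γ ∈ AddSubgroup.closure P := by
  classical
  have hγW : reflEquiv (formT B Vdot hc) ((γ : V), 0) ∈ weylTilde B Vdot hc (nonIso B R) :=
    reflT_mem_weylTilde B Vdot hc hγ
  rw [← hgen] at hγW
  obtain ⟨l, hl, hEl⟩ := aux_exists_word B Vdot hc hγW
  obtain ⟨prs, hprs, hid⟩ := aux_lemW B Vdot hc R P hR hPx l hl
  set L := AddSubgroup.closure P with hLdef
  have hid' : ∀ x : V,
      reflEquiv (formT B Vdot hc) ((γ : V), 0) ((x, 0) : VT B)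
        = ((x, 0) : VT B) - (prs.map (fun pr =>
          (2 / B pr.1 pr.1 * B x pr.1) • ((pr.2, 0) : VT B))).sum := by
    intro x
    rw [hEl, hid ((x, 0) : VT B)]
    congr 2
    apply List.map_congr_left
    intro pr _
    rw [aux_formT_emb]
  -- generic evaluation: first component of the sum is an `L`-combination
  have key : ∀ x : V, (∀ pr ∈ prs, ∃ mk : ℤ, 2 / B pr.1 pr.1 * B x pr.1 = (mk : ℝ)) →
      ((prs.map (fun pr =>
        (2 / B pr.1 pr.1 * B x pr.1) • ((pr.2, 0) : VT B))).sum).1 ∈ L := by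
    intro x hx
    have hrfl : ((prs.map (fun pr =>
        (2 / B pr.1 pr.1 * B x pr.1) • ((pr.2, 0) : VT B))).sum).1
        = (AddMonoidHom.fst V (Module.Dual ℝ ↥(LinearMap.ker B))) ((prs.map (fun pr =>
          (2 / B pr.1 pr.1 * B x pr.1) • ((pr.2, 0) : VT B))).sum) := rfl
    rw [hrfl, map_list_sum, List.map_map]
    apply AddSubgroup.list_sum_mem
    intro z hz
    rw [List.mem_map] at hz
    obtain ⟨pr, hprmem, rfl⟩ := hz
    obtain ⟨mk, hmk⟩ := hx pr hprmem
    show (2 / B pr.1 pr.1 * B x pr.1) • (pr.2 : V) ∈ L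
    rw [hmk, Int.cast_smul_eq_zsmul]
    exact AddSubgroup.zsmul_mem _ (hprs pr hprmem).2 mk
  -- evaluation at `γ` itself: `γ + γ ∈ L`
  have h2γ : γ + γ ∈ L := by
    have hval := hid' γ
    rw [reflEquiv_apply, reflMap_apply] at hval
    simp only [aux_formT_emb] at hval
    rw [div_mul_cancel₀ _ hγ.2] at hval
    have hsum := sub_right_inj.mp hval
    have hmem := key γ (fun pr hpr => by
      obtain ⟨mk, hmk⟩ := hR.integrality pr.1 (hPx (hprs pr hpr).1) γ hγ
      exact ⟨mk, by rw [← hmk]; ring⟩)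
    rw [← hsum] at hmem
    have hfst : (((2 : ℝ)) • ((γ, 0) : VT B)).1 = γ + γ := by
      rw [Prod.smul_fst, two_smul]
    rwa [hfst] at hmem
  -- evaluation at the odd test vector
  obtain ⟨ρ, hρint, m, hρodd⟩ := aux_rho B R hR hred hγ
  have hmγ : (2 * (m : ℝ) + 1) • γ ∈ L := by
    have hval := hid' ρ
    rw [reflEquiv_apply, reflMap_apply] at hval
    simp only [aux_formT_emb] at hval
    have hco : 2 / B γ γ * B ρ γ = 2 * (m : ℝ) + 1 := by rw [← hρodd]; ring
    rw [hco] at hval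
    have hsum := sub_right_inj.mp hval
    have hmem := key ρ (fun pr hpr => by
      obtain ⟨mk, hmk⟩ := hρint pr.1 (hPx (hprs pr hpr).1)
      exact ⟨mk, by rw [← hmk]; ring⟩)
    rw [← hsum] at hmem
    have hfst : ((2 * (m : ℝ) + 1) • ((γ, 0) : VT B)).1 = (2 * (m : ℝ) + 1) • γ :=
      Prod.smul_fst _ _
    rwa [hfst] at hmem
  -- combine the two memberships
  have hfinal : γ = (2 * (m : ℝ) + 1) • γ - (m : ℝ) • (γ + γ) := by
    rw [show γ + γ = (2 : ℝ) • γ from (two_smul ℝ γ).symm]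
    module
  rw [hfinal]
  refine sub_mem hmγ ?_
  have hz : (m : ℝ) • (γ + γ) = m • (γ + γ) := Int.cast_smul_eq_zsmul ℝ m (γ + γ)
  rw [hz]
  exact AddSubgroup.zsmul_mem _ h2γ m

end AuxMain

section AuxDich

variable {V : Type*} [AddCommGroup V] [Module ℝ V]
variable (B : LinearMap.BilinForm ℝ V) (Vdot : Submodule ℝ V)
variable (hc : IsCompl (LinearMap.ker B) Vdot)

/-- The negative of an embedded reflection at its own vector. -/
lemma aux_rT_self {γ : V} (hγ : B γ γ ≠ 0) :
    reflEquiv (formT B Vdot hc) ((γ : V), 0) (((γ : V), 0) : VT B)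
      = -((((γ : V), 0)) : VT B) := by
  rw [aux_rT_emb, aux_reflMap_self B hγ, Prod.neg_mk, neg_zero]

/-- Dichotomy: if the reflection of a nonisotropic vector lies in the group generated
by two mutually orthogonal families, the vector lies in the span of one of them. -/
lemma aux_dichotomy {P₁ P₂ : Set V} (horth : ∀ a ∈ P₁, ∀ b ∈ P₂, B a b = 0)
    (hsym : ∀ x y : V, B x y = B y x) {γ : V} (hγ : B γ γ ≠ 0)
    (hγW : reflEquiv (formT B Vdot hc) ((γ : V), 0) ∈ Subgroup.closure
      (((fun a => reflEquiv (formT B Vdot hc) (a, 0)) '' P₁) ∪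
        ((fun a => reflEquiv (formT B Vdot hc) (a, 0)) '' P₂))) :
    γ ∈ Submodule.span ℝ P₁ ∨ γ ∈ Submodule.span ℝ P₂ := by
  classical
  have hcommgen : ∀ x ∈ (fun a => reflEquiv (formT B Vdot hc) (a, 0)) '' P₁,
      ∀ y ∈ (fun a => reflEquiv (formT B Vdot hc) (a, 0)) '' P₂, Commute x y := by
    rintro x ⟨a, ha, rfl⟩ y ⟨b, hb, rfl⟩
    exact aux_rT_commute B Vdot hc hsym (horth a ha b hb)
  obtain ⟨u, hu, v, hv, huv⟩ := aux_decomp hcommgen hγW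
  have hcomm : Commute u (reflEquiv (formT B Vdot hc) ((γ : V), 0)) := by
    rw [huv]
    exact (Commute.refl u).mul_right (aux_commute_closure hcommgen u hu v hv)
  -- apply the commutation at the embedded vector
  have happ : u (reflEquiv (formT B Vdot hc) ((γ : V), 0) (((γ : V), 0) : VT B))
      = reflEquiv (formT B Vdot hc) ((γ : V), 0) (u (((γ : V), 0) : VT B)) := by
    have := congrArg (fun w => w ((((γ : V), 0)) : VT B)) hcomm.eq
    exact this
  rw [aux_rT_self B Vdot hc hγ, map_neg] at happ
  rw [aux_rT_apply] at happ
  set c := 2 / B γ γ * formT B Vdot hc (u (((γ : V), 0) : VT B)) ((γ : V), 0) with hcdef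
  have h2u : u (((γ : V), 0) : VT B) + u (((γ : V), 0) : VT B) = c • ((((γ : V), 0)) : VT B) := by
    have h3 : c • ((((γ : V), 0)) : VT B)
        = u (((γ : V), 0) : VT B) - -(u (((γ : V), 0) : VT B)) := by
      rw [happ]; abel
    rw [h3]; abel
  have huγ : u (((γ : V), 0) : VT B) = (2⁻¹ * c) • ((((γ : V), 0)) : VT B) := by
    have h4 : ((2 : ℝ)) • u (((γ : V), 0) : VT B) = c • ((((γ : V), 0)) : VT B) := by
      rw [two_smul]; exact h2u
    calc u (((γ : V), 0) : VT B)
        = (2⁻¹ : ℝ) • (((2 : ℝ)) • u (((γ : V), 0) : VT B)) := by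
          rw [smul_smul]; norm_num
      _ = (2⁻¹ : ℝ) • (c • ((((γ : V), 0)) : VT B)) := by rw [h4]
      _ = (2⁻¹ * c) • ((((γ : V), 0)) : VT B) := by rw [smul_smul]
  by_cases ht : (2⁻¹ * c : ℝ) = 1
  · -- `u` fixes the vector, so `v` negates it and `γ` lies in the span of `P₂`
    right
    have huγ1 : u (((γ : V), 0) : VT B) = (((γ : V), 0) : VT B) := by
      rw [huγ, ht, one_smul]
    have hvγ : v (((γ : V), 0) : VT B) = -((((γ : V), 0)) : VT B) := by
      have hveq : v = u⁻¹ * reflEquiv (formT B Vdot hc) ((γ : V), 0) := by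
        rw [huv]; group
      rw [hveq]
      show u⁻¹ (reflEquiv (formT B Vdot hc) ((γ : V), 0) (((γ : V), 0) : VT B)) = _
      rw [aux_rT_self B Vdot hc hγ, map_neg]
      congr 1
      conv_lhs => rw [← huγ1]
      show (u⁻¹ * u) (((γ : V), 0) : VT B) = (((γ : V), 0) : VT B)
      rw [inv_mul_cancel]
      rfl
    obtain ⟨l, hl, rfl⟩ := aux_exists_word B Vdot hc (P := P₂) hv
    have hspan := aux_lemS B Vdot hc P₂ l hl (((γ : V), 0) : VT B)
    rw [hvγ] at hspan
    have heq2 : -((((γ : V), 0)) : VT B) - (((γ : V), 0) : VT B)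
        = ((-2 : ℝ)) • ((((γ : V), 0)) : VT B) := by
      module
    rw [heq2] at hspan
    have hmem : (((γ : V), 0) : VT B) ∈ Submodule.span ℝ
        ((fun a => ((a, 0) : VT B)) '' P₂) := by
      have := Submodule.smul_mem _ ((-2 : ℝ))⁻¹ hspan
      rwa [smul_smul, inv_mul_cancel₀ (by norm_num : (-2:ℝ) ≠ 0), one_smul] at this
    exact aux_span_fst B hmem
  · -- `u` moves the vector within its line, putting `γ` in the span of `P₁`
    left
    obtain ⟨l, hl, rfl⟩ := aux_exists_word B Vdot hc (P := P₁) hu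
    have hspan := aux_lemS B Vdot hc P₁ l hl (((γ : V), 0) : VT B)
    rw [huγ] at hspan
    have heq2 : (2⁻¹ * c) • ((((γ : V), 0)) : VT B) - (((γ : V), 0) : VT B)
        = ((2⁻¹ * c - 1 : ℝ)) • ((((γ : V), 0)) : VT B) := by
      module
    rw [heq2] at hspan
    have hne : (2⁻¹ * c - 1 : ℝ) ≠ 0 := sub_ne_zero.mpr ht
    have hmem : (((γ : V), 0) : VT B) ∈ Submodule.span ℝ
        ((fun a => ((a, 0) : VT B)) '' P₁) := by
      have := Submodule.smul_mem _ ((2⁻¹ * c - 1 : ℝ))⁻¹ hspan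
      rwa [smul_smul, inv_mul_cancel₀ hne, one_smul] at this
    exact aux_span_fst B hmem

end AuxDich

/-- If `P ⊆ R^×` satisfies `W_P = W`, then `⟨P⟩ = ⟨R⟩` and `P`
is connected. -/
theorem weylGenerating_lattice_and_connected
    {V : Type*} [AddCommGroup V] [Module ℝ V] [FiniteDimensional ℝ V]
    (B : LinearMap.BilinForm ℝ V) (R : Set V) (hR : IsEARS B R) (hred : IsReduced B R)
    (Vdot : Submodule ℝ V) (hc : IsCompl (LinearMap.ker B) Vdot)
    (P : Set V) (hPx : P ⊆ nonIso B R)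
    (hgen : weylTilde B Vdot hc P = weylTilde B Vdot hc (nonIso B R)) :
    AddSubgroup.closure P = AddSubgroup.closure R ∧ IsConnSet B P := by
  constructor
  · -- lattice equality
    apply le_antisymm
    · exact AddSubgroup.closure_mono (fun a ha => (hPx ha).1)
    · rw [AddSubgroup.closure_le]
      intro β hβ
      by_cases h0 : B β β = 0
      · have hker : β ∈ LinearMap.ker B := aux_isotropic_mem_ker B hR.symm hR.posSemidef h0
        have hmem : β ∈ R ∩ (LinearMap.ker B : Set V) := ⟨hβ, hker⟩
        rw [hR.isoEq] at hmem
        obtain ⟨-, hdiff⟩ := hmem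
        obtain ⟨x, hx, y, hy, hxy⟩ := Set.mem_sub.mp hdiff
        rw [← hxy]
        exact sub_mem (aux_mem_closure B Vdot hc R P hR hred hPx hgen hx)
          (aux_mem_closure B Vdot hc R P hR hred hPx hgen hy)
      · exact aux_mem_closure B Vdot hc R P hR hred hPx hgen ⟨hβ, h0⟩
  · -- connectedness
    rintro ⟨P₁, P₂, hne₁, hne₂, huni, hint, horth⟩
    have hP₁P : P₁ ⊆ P := by rw [← huni]; exact Set.subset_union_left
    have hP₂P : P₂ ⊆ P := by rw [← huni]; exact Set.subset_union_right
    have hsplit : (fun a => reflEquiv (formT B Vdot hc) (a, 0)) '' P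
        = ((fun a => reflEquiv (formT B Vdot hc) (a, 0)) '' P₁) ∪
          ((fun a => reflEquiv (formT B Vdot hc) (a, 0)) '' P₂) := by
      rw [← huni, Set.image_union]
    have hdich : ∀ γ ∈ nonIso B R,
        γ ∈ Submodule.span ℝ P₁ ∨ γ ∈ Submodule.span ℝ P₂ := by
      intro γ hγ
      have hγW : reflEquiv (formT B Vdot hc) ((γ : V), 0)
          ∈ weylTilde B Vdot hc (nonIso B R) := reflT_mem_weylTilde B Vdot hc hγ
      rw [← hgen] at hγW
      have hγW' : reflEquiv (formT B Vdot hc) ((γ : V), 0) ∈ Subgroup.closure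
          (((fun a => reflEquiv (formT B Vdot hc) (a, 0)) '' P₁) ∪
            ((fun a => reflEquiv (formT B Vdot hc) (a, 0)) '' P₂)) := by
        rw [← hsplit]
        exact hγW
      exact aux_dichotomy B Vdot hc horth hR.symm hγ.2 hγW'
    apply hR.conn
    refine ⟨{γ | γ ∈ nonIso B R ∧ γ ∈ Submodule.span ℝ P₁},
      nonIso B R \ {γ | γ ∈ nonIso B R ∧ γ ∈ Submodule.span ℝ P₁}, ?_, ?_, ?_, ?_, ?_⟩
    · obtain ⟨a, ha⟩ := hne₁
      exact ⟨a, hPx (hP₁P ha), Submodule.subset_span ha⟩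
    · obtain ⟨b, hb⟩ := hne₂
      refine ⟨b, hPx (hP₂P hb), ?_⟩
      rintro ⟨-, hbspan⟩
      exact (hPx (hP₂P hb)).2
        (aux_span_orth B horth b hbspan b (Submodule.subset_span hb))
    · exact Set.union_diff_cancel (fun γ hγ => hγ.1)
    · ext x
      simp only [Set.mem_inter_iff, Set.mem_diff, Set.mem_setOf_eq, Set.mem_empty_iff_false,
        iff_false]
      tauto
    · rintro a ⟨haI, haspan⟩ b ⟨hbI, hbQ⟩
      have hbspan : b ∈ Submodule.span ℝ P₂ := by
        rcases hdich b hbI with h | h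
        · exact absurd ⟨hbI, h⟩ hbQ
        · exact h
      exact aux_span_orth B horth a haspan b hbspan
end EARSPaper
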